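/- Let d ≥ 1, R > 0, δ > 0 and C₀ ≥ 0 with C₀δ < 1. Let p : ℝ^d → ℝ be continuously differentiable and suppose sup_{x ∈ (−R,R)^d} |∇p(x)| ≤ C₀ sup_{x ∈ (−R,R)^d} |p(x)|, where |∇p(x)| is the Euclidean norm of the gradient. Let x_1, …, x_N ∈ (−R,R)^d be points such that min_{1 ≤ j ≤ N} |x − x_j| ≤ δ for every x ∈ (−R,R)^d, and suppose |p(x_j)| ≤ 1 for all j = 1, …, N. Then sup_{x ∈ (−R,R)^d} |p(x)| ≤ 1/(1 − C₀δ). -/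

import Mathlib

def cube (d : ℕ) (R : ℝ) : Set (EuclideanSpace ℝ (Fin d)) := {y | ∀ i, |y i| < R}

/-!
Nearest-point argument: by the mean value theorem on the segment from `y` to a point `x j`
with `dist y (x j) ≤ δ` (inside the convex cube), `|p y| ≤ 1 + C₀ δ S` where `S` is the sup of
`|p|` on the cube. This bound shows that `S` is a genuine supremum (not the junk value of `sSup`),
and taking the sup over `y` gives `S ≤ 1 + C₀ δ S`, i.e. `S ≤ 1 / (1 - C₀ δ)`.
-/

open Set

theorem convex_cube (d : ℕ) (R : ℝ) : Convex ℝ (cube d R) := by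
  have : cube d R = ⋂ i, EuclideanSpace.proj i ⁻¹' Ioo (-R) R := by
    ext y; simp [cube, abs_lt]
  rw [this]
  exact convex_iInter fun i => (convex_Ioo _ _).linear_preimage (EuclideanSpace.proj i).toLinearMap

theorem norm_fderiv_eq_norm_gradient {E : Type*} [NormedAddCommGroup E] [InnerProductSpace ℝ E]
    [CompleteSpace E] (f : E → ℝ) (x : E) : ‖fderiv ℝ f x‖ = ‖gradient f x‖ :=
  ((InnerProductSpace.toDual ℝ E).symm.norm_map _).symm

theorem norm_le_add_mul_of_fill_dist_le {E F ι : Type*} [NormedAddCommGroup E] [NormedSpace ℝ E]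
    [NormedAddCommGroup F] [NormedSpace ℝ F] {f : E → F} {s : Set E} {K M δ : ℝ} (hs : Convex ℝ s)
    (hf : ∀ y ∈ s, DifferentiableAt ℝ f y) (hK : ∀ y ∈ s, ‖fderiv ℝ f y‖ ≤ K)
    {x : ι → E} (hx : ∀ j, x j ∈ s) (hfill : ∀ y ∈ s, ∃ j, dist y (x j) ≤ δ)
    (hM : ∀ j, ‖f (x j)‖ ≤ M) : ∀ y ∈ s, ‖f y‖ ≤ M + K * δ := by
  intro y hy
  obtain ⟨j, hj⟩ := hfill y hy
  have hK₀ : 0 ≤ K := (norm_nonneg _).trans (hK y hy)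
  calc ‖f y‖ ≤ ‖f (x j)‖ + ‖f y - f (x j)‖ := norm_le_norm_add_norm_sub' _ _
    _ ≤ M + K * ‖y - x j‖ :=
      add_le_add (hM j) (hs.norm_image_sub_le_of_norm_fderiv_le hf hK (hx j) hy)
    _ ≤ M + K * δ := by rw [← dist_eq_norm]; gcongr

theorem le_div_of_le_add_mul_sSup {α : Type*} {f : α → ℝ} {s : Set α} {a c : ℝ} (hc : c < 1)
    (h : ∀ y ∈ s, f y ≤ a + c * sSup (f '' s)) : ∀ y ∈ s, f y ≤ a / (1 - c) := by
  intro y hy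
  have hbdd : BddAbove (f '' s) := ⟨_, forall_mem_image.2 h⟩
  have hS : sSup (f '' s) ≤ a + c * sSup (f '' s) :=
    csSup_le ⟨f y, mem_image_of_mem f hy⟩ (forall_mem_image.2 h)
  calc f y ≤ sSup (f '' s) := le_csSup hbdd (mem_image_of_mem f hy)
    _ ≤ a / (1 - c) := by rw [le_div_iff₀ (by linarith)]; linarith

theorem sup_bound_from_grid_values_general (d : ℕ) (R δ C₀ : ℝ)
    (hCδ : C₀ * δ < 1)
    (p : EuclideanSpace ℝ (Fin d) → ℝ) (hp : ContDiff ℝ 1 p)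
    (hgrad : ∀ x ∈ cube d R,
      ‖gradient p x‖ ≤ C₀ * sSup ((fun y => |p y|) '' cube d R))
    (N : ℕ) (x : Fin N → EuclideanSpace ℝ (Fin d)) (hx : ∀ j, x j ∈ cube d R)
    (hfill : ∀ y ∈ cube d R, ∃ j, dist y (x j) ≤ δ)
    (hpx : ∀ j, |p (x j)| ≤ 1) :
    ∀ y ∈ cube d R, |p y| ≤ 1 / (1 - C₀ * δ) := by
  refine le_div_of_le_add_mul_sSup hCδ fun y hy => ?_
  have hderiv : ∀ z ∈ cube d R, ‖fderiv ℝ p z‖ ≤ C₀ * sSup ((fun y => |p y|) '' cube d R) :=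
    fun z hz => (norm_fderiv_eq_norm_gradient p z).trans_le (hgrad z hz)
  have hnear : |p y| ≤ 1 + C₀ * sSup ((fun y => |p y|) '' cube d R) * δ :=
    norm_le_add_mul_of_fill_dist_le (convex_cube d R)
      (fun z _ => hp.differentiable one_ne_zero z) hderiv hx hfill hpx y hy
  linarith

/-- **Sup-norm bound from values at a dense point set** (proof of Lemma 3.7). If a `C¹`
function `p` satisfies `sup_{cube} |∇p| ≤ C₀ sup_{cube} |p|`, is bounded by `1` at a point set
of fill distance at most `δ` in the cube, and `C₀ δ < 1`, then
`|p| ≤ 1/(1 − C₀ δ)` throughout the cube. -/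
theorem sup_bound_from_grid_values (d : ℕ) (hd : 1 ≤ d) (R δ C₀ : ℝ)
    (hR : 0 < R) (hδ : 0 < δ) (hC₀ : 0 ≤ C₀) (hCδ : C₀ * δ < 1)
    (p : EuclideanSpace ℝ (Fin d) → ℝ) (hp : ContDiff ℝ 1 p)
    (hgrad : ∀ x ∈ cube d R,
      ‖gradient p x‖ ≤ C₀ * sSup ((fun y => |p y|) '' cube d R))
    (N : ℕ) (x : Fin N → EuclideanSpace ℝ (Fin d)) (hx : ∀ j, x j ∈ cube d R)
    (hfill : ∀ y ∈ cube d R, ∃ j, dist y (x j) ≤ δ)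
    (hpx : ∀ j, |p (x j)| ≤ 1) :
    ∀ y ∈ cube d R, |p y| ≤ 1 / (1 - C₀ * δ) :=
  sup_bound_from_grid_values_general d R δ C₀ hCδ p hp hgrad N x hx hfill hpx
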